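/- arXiv:1711.04935 — 2 statements merged into one kernel-verified Lean document; each statement's English description precedes it below -/
import Mathlib

section
/- Let N be a simple loosely tree-based phylogenetic network on X that is not a tree, let T be any spanning tree of N with leaf set X (a base tree), and let P be the set of vertices of N incident to a pendant edge. Then T does not contain every non-pendant edge of N incident to a vertex of P; i.e., some vertex of P loses a non-pendant edge in T. -/
open SimpleGraph

variable {V : Type*}

/-- The degree of a vertex. -/
noncomputable def deg (G : SimpleGraph V) (v : V) : ℕ := (G.neighborSet v).ncard

/-- The leaves (degree-1 vertices) of a graph. -/
def leaves (G : SimpleGraph V) : Set V := {v | deg G v = 1}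

/-- An (unrooted, nonbinary) phylogenetic network on leaf set `X`:
a connected graph with no degree-2 vertices whose leaf set is exactly `X`. -/
def IsPhyloNetwork (G : SimpleGraph V) (X : Set V) : Prop :=
  G.Connected ∧ (∀ v, deg G v ≠ 2) ∧ leaves G = X

/-- `T` is a spanning tree of `N` with leaf set exactly `X`. -/
def IsBaseTree (N T : SimpleGraph V) (X : Set V) : Prop :=
  T ≤ N ∧ T.IsTree ∧ leaves T = X

/-- Loosely tree-based: some spanning tree of `N` has leaf set exactly `X`. -/
def LooselyTreeBased (N : SimpleGraph V) (X : Set V) : Prop :=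
  ∃ T, IsBaseTree N T X

/-- Tree-based (spanning tree form): some spanning tree `T` with leaf set `X` contains
every edge of `N` joining two vertices of degree at least 4, and every degree-2 vertex
of `T` has degree 3 in `N`. -/
def TreeBased (N : SimpleGraph V) (X : Set V) : Prop :=
  ∃ T, IsBaseTree N T X ∧
    (∀ v w, N.Adj v w → 4 ≤ deg N v → 4 ≤ deg N w → T.Adj v w) ∧
    (∀ v, deg T v = 2 → deg N v = 3)

/-- Strictly tree-based (spanning tree form): some spanning tree `T` with leaf set `X`
contains every edge of `N` incident to a vertex of degree at least 4. -/
def StrictlyTreeBased (N : SimpleGraph V) (X : Set V) : Prop :=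
  ∃ T, IsBaseTree N T X ∧ (∀ v w, N.Adj v w → 4 ≤ deg N v → T.Adj v w)

/-- Tree-based (construction form): `N` is obtained from a tree by subdividing edges
(creating attachment points, i.e. the degree-2 vertices of the subdivided tree `T`)
and adding new edges, each new edge joining two attachment points or an attachment
point and an original vertex, with every attachment point of degree exactly 3 in `N`. -/
def TreeBasedConstr (N : SimpleGraph V) (X : Set V) : Prop :=
  ∃ T, IsBaseTree N T X ∧
    (∀ v w, N.Adj v w → ¬ T.Adj v w → deg T v = 2 ∨ deg T w = 2) ∧
    (∀ v, deg T v = 2 → deg N v = 3)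

/-- Strictly tree-based (construction form): as in `TreeBasedConstr`, but every new
edge joins two attachment points. -/
def StrictlyTreeBasedConstr (N : SimpleGraph V) (X : Set V) : Prop :=
  ∃ T, IsBaseTree N T X ∧
    (∀ v w, N.Adj v w → ¬ T.Adj v w → deg T v = 2 ∧ deg T w = 2) ∧
    (∀ v, deg T v = 2 → deg N v = 3)

/-- The leaf set of a subgraph: vertices of the subgraph having exactly one
neighbour in the subgraph. -/
def subLeaves {N : SimpleGraph V} (H : N.Subgraph) : Set V :=
  {v | v ∈ H.verts ∧ (H.neighborSet v).ncard = 1}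

/-- A simple network: every cut-edge (bridge) is a pendant edge. -/
def IsSimpleNetwork (N : SimpleGraph V) : Prop :=
  ∀ v w, N.Adj v w → N.IsBridge s(v, w) → deg N v = 1 ∨ deg N w = 1


section Aux

lemma aux_deg_eq [Fintype V] (G : SimpleGraph V) [DecidableRel G.Adj] (v : V) :
    deg G v = G.degree v := by
  simp [deg, SimpleGraph.degree, SimpleGraph.neighborFinset, Set.ncard_eq_toFinset_card']

lemma aux_deg_one {G : SimpleGraph V} {b : V} (h : deg G b = 1) :
    ∃ c, G.Adj b c ∧ ∀ d, G.Adj b d → d = c := by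
  rw [deg, Set.ncard_eq_one] at h
  obtain ⟨c, hc⟩ := h
  have hmem : ∀ d, G.Adj b d ↔ d ∈ G.neighborSet b := fun d => Iff.rfl
  refine ⟨c, ?_, ?_⟩
  · have : c ∈ G.neighborSet b := by rw [hc]; rfl
    exact this
  · intro d hd
    have : d ∈ G.neighborSet b := hd
    rw [hc] at this
    exact this

lemma aux_no_escape {G : SimpleGraph V} {v : V} {L : Set V}
    (hv : ∀ b, G.Adj v b → b ∈ L) (hL : ∀ u, u ∈ L → ∀ c, G.Adj u c → c = v) :
    ∀ a, G.Reachable v a → a = v ∨ a ∈ L := by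
  have key : ∀ k (a : V) (p : G.Walk v a), p.length ≤ k → a = v ∨ a ∈ L := by
    intro k
    induction k with
    | zero =>
      intro a p hp
      cases p with
      | nil => exact Or.inl rfl
      | cons h q => simp [SimpleGraph.Walk.length_cons] at hp
    | succ n ih =>
      intro a p hp
      cases p with
      | nil => exact Or.inl rfl
      | @cons _ b _ h q =>
        have hb : b ∈ L := hv b h
        cases q with
        | nil => exact Or.inr hb
        | @cons _ c _ h2 r =>
          have hc : c = v := hL b hb c h2
          subst hc
          apply ih a r
          simp [SimpleGraph.Walk.length_cons] at hp
          omega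
  intro a ha
  obtain ⟨p⟩ := ha
  exact key p.length a p le_rfl

lemma aux_tree {N T : SimpleGraph V} (hconn : N.Connected) (hle : T ≤ N)
    (hlv : leaves T = leaves N) (hTt : T.IsTree) {v : V}
    (hall : ∀ b, N.Adj v b → deg N b = 1) : N.IsTree := by
  -- every leaf-neighbor of v is joined to v in T
  have hTadj : ∀ b, N.Adj v b → T.Adj b v := by
    intro b hb
    have hbN : deg N b = 1 := hall b hb
    have hbT : deg T b = 1 := by
      have : b ∈ leaves N := hbN
      rw [← hlv] at this
      exact this
    obtain ⟨y, hy, hyu⟩ := aux_deg_one hbT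
    obtain ⟨c, hc, hcu⟩ := aux_deg_one hbN
    have h1 : y = c := hcu y (hle hy)
    have h2 : v = c := hcu v hb.symm
    rw [h2, ← h1]
    exact hy
  -- all vertices are v or neighbors of v
  have hreach : ∀ a, a = v ∨ N.Adj v a := by
    intro a
    have := aux_no_escape (G := N) (v := v) (L := N.neighborSet v)
      (fun b hb => hb) ?_ a (hconn.preconnected v a)
    · exact this
    · intro u hu c hc
      obtain ⟨c0, hc0, hcu⟩ := aux_deg_one (hall u hu)
      have h1 : c = c0 := hcu c hc
      have h2 : v = c0 := hcu v hu.symm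
      rw [h1, h2]
  -- N ≤ T
  have hNle : N ≤ T := by
    intro a b hab
    rcases hreach a with ha | ha
    · subst ha
      exact (hTadj b hab).symm
    · obtain ⟨c0, hc0, hcu⟩ := aux_deg_one (hall a ha)
      have h1 : b = c0 := hcu b hab
      have h2 : v = c0 := hcu v ha.symm
      rw [h1, ← h2]
      exact hTadj a ha
  have : N = T := le_antisymm hNle hle
  rw [this]
  exact hTt

end Aux

theorem base_tree_misses_nonpendant_edge [Fintype V] (N T : SimpleGraph V) (X : Set V)
    (hN : IsPhyloNetwork N X) (hs : IsSimpleNetwork N) (hnt : ¬ N.IsTree)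
    (hT : IsBaseTree N T X) :
    ∃ v w, (∃ u, N.Adj v u ∧ deg N u = 1) ∧ N.Adj v w ∧
      deg N v ≠ 1 ∧ deg N w ≠ 1 ∧ ¬ T.Adj v w := by
  classical
  by_contra hcon
  push_neg at hcon
  obtain ⟨hNc, hdeg2, hX⟩ := hN
  obtain ⟨hle, hTt, hXT⟩ := hT
  have hlv : leaves T = leaves N := hXT.trans hX.symm
  -- |V| ≥ 2
  have hcard2 : 2 ≤ Fintype.card V := by
    by_contra h
    push_neg at h
    have hss : Subsingleton V := Fintype.card_le_one_iff_subsingleton.mp (by omega)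
    refine hnt ⟨hNc, ?_⟩
    intro a c hc
    cases c with
    | nil => exact absurd rfl hc.ne_nil
    | cons h2 q => exact absurd (Subsingleton.elim _ _) h2.ne
  -- leaves of N have a unique neighbor, which is not a leaf
  have hleafnb : ∀ x, deg N x = 1 →
      ∃ c, N.Adj x c ∧ (∀ d, N.Adj x d → d = c) ∧ deg N c ≠ 1 := by
    intro x hx
    obtain ⟨c, hc, hu⟩ := aux_deg_one hx
    refine ⟨c, hc, hu, ?_⟩
    intro hc1
    refine hnt (aux_tree hNc hle hlv hTt (v := x) ?_)
    intro b hb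
    rw [hu b hb]
    exact hc1
  -- pendant edges of N are in T
  have hpend : ∀ x c, deg N x = 1 → N.Adj x c → T.Adj x c := by
    intro x c hx hxc
    have hxT : deg T x = 1 := by
      have : x ∈ leaves N := hx
      rw [← hlv] at this
      exact this
    obtain ⟨y, hy, hyu⟩ := aux_deg_one hxT
    obtain ⟨c0, hc0, hu⟩ := aux_deg_one hx
    have h1 : y = c0 := hu y (hle hy)
    have h2 : c = c0 := hu c hxc
    rw [h2, ← h1]
    exact hy
  -- all N-edges at a P-vertex are in T
  have hPdeg : ∀ v, deg N v ≠ 1 → (∃ u, N.Adj v u ∧ deg N u = 1) →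
      T.neighborFinset v = N.neighborFinset v := by
    intro v hv hvP
    ext w
    simp only [SimpleGraph.mem_neighborFinset]
    constructor
    · exact fun h => hle h
    · intro hw
      by_cases hw1 : deg N w = 1
      · exact (hpend w v hw1 hw.symm).symm
      · exact hcon v w hvP hw hv hw1
  -- every P-vertex has at least two non-leaf neighbors
  have hP2 : ∀ v, deg N v ≠ 1 → (∃ u, N.Adj v u ∧ deg N u = 1) →
      2 ≤ ((N.neighborFinset v).filter (fun u => ¬ deg N u = 1)).card := by
    intro v hv hvP
    by_contra hlt
    rw [not_le] at hlt
    have hone := Finset.card_le_one.mp (by omega :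
      ((N.neighborFinset v).filter (fun u => ¬ deg N u = 1)).card ≤ 1)
    by_cases hex : ∃ w0, N.Adj v w0 ∧ deg N w0 ≠ 1
    · obtain ⟨w0, hw0, hw0n⟩ := hex
      have hvw0 : v ≠ w0 := hw0.ne
      have hbr : N.IsBridge s(v, w0) := by
        rw [SimpleGraph.isBridge_iff]
        intro hreach
        have hres := aux_no_escape (G := N \ SimpleGraph.fromEdgeSet {s(v, w0)}) (v := v)
          (L := {b | N.Adj v b ∧ deg N b = 1}) ?_ ?_ w0 hreach
        · rcases hres with h | h
          · exact hvw0 h.symm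
          · exact hw0n h.2
        · intro b hb
          rw [SimpleGraph.sdiff_adj, SimpleGraph.fromEdgeSet_adj] at hb
          obtain ⟨hb1, hb2⟩ := hb
          have hbw0 : b ≠ w0 := by
            intro h
            subst h
            exact hb2 ⟨by simp, hb1.ne⟩
          refine ⟨hb1, ?_⟩
          by_contra hbl
          have hbmem : b ∈ (N.neighborFinset v).filter (fun u => ¬ deg N u = 1) := by
            simp [SimpleGraph.mem_neighborFinset, hb1, hbl]
          have hwmem : w0 ∈ (N.neighborFinset v).filter (fun u => ¬ deg N u = 1) := by
            simp [SimpleGraph.mem_neighborFinset, hw0, hw0n]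
          exact hbw0 (hone b hbmem w0 hwmem)
        · intro u hu c hc
          have hcN : N.Adj u c := by
            rw [SimpleGraph.sdiff_adj] at hc
            exact hc.1
          obtain ⟨c0, hc0, hcu⟩ := aux_deg_one hu.2
          have h1 : c = c0 := hcu c hcN
          have h2 : v = c0 := hcu v hu.1.symm
          rw [h1, h2]
      rcases hs v w0 hw0 hbr with h | h
      · exact hv h
      · exact hw0n h
    · push_neg at hex
      exact hnt (aux_tree hNc hle hlv hTt (v := v) hex)
  -- counting
  have hhand : ∑ v, T.degree v = 2 * T.edgeFinset.card :=
    SimpleGraph.sum_degrees_eq_twice_card_edges T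
  have hedges : T.edgeFinset.card + 1 = Fintype.card V := hTt.card_edgeFinset
  set XF : Finset V := Finset.univ.filter (fun x => deg N x = 1) with hXF
  set YF : Finset V := Finset.univ.filter (fun x => ¬ deg N x = 1) with hYF
  set PF : Finset V := YF.filter (fun v => ∃ u, N.Adj v u ∧ deg N u = 1) with hPF
  set WF : Finset V := YF.filter (fun v => ¬ ∃ u, N.Adj v u ∧ deg N u = 1) with hWF
  have hsplit1 : ∑ x ∈ XF, T.degree x + ∑ x ∈ YF, T.degree x = ∑ x, T.degree x :=
    Finset.sum_filter_add_sum_filter_not Finset.univ (fun x => deg N x = 1) _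
  have hsplit2 : ∑ x ∈ PF, T.degree x + ∑ x ∈ WF, T.degree x = ∑ x ∈ YF, T.degree x :=
    Finset.sum_filter_add_sum_filter_not YF (fun v => ∃ u, N.Adj v u ∧ deg N u = 1) _
  have hcsplit1 : XF.card + YF.card = Fintype.card V := by
    rw [hXF, hYF]
    rw [Finset.card_filter_add_card_filter_not]
    exact Finset.card_univ
  have hcsplit2 : PF.card + WF.card = YF.card := by
    rw [hPF, hWF]
    exact Finset.card_filter_add_card_filter_not _
  -- leaves have T-degree 1
  have hSX : ∑ x ∈ XF, T.degree x = XF.card := by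
    rw [Finset.sum_congr rfl (fun x hx => ?_), Finset.sum_const, smul_eq_mul, mul_one]
    have hx1 : deg N x = 1 := (Finset.mem_filter.mp hx).2
    have hxT : deg T x = 1 := by
      have : x ∈ leaves N := hx1
      rw [← hlv] at this
      exact this
    rw [← aux_deg_eq]
    exact hxT
  -- W-vertices have T-degree ≥ 2
  have hSW : 2 * WF.card ≤ ∑ x ∈ WF, T.degree x := by
    have hbound : ∀ x ∈ WF, 2 ≤ T.degree x := by
      intro x hx
      have hx1 : ¬ deg N x = 1 := (Finset.mem_filter.mp ((Finset.mem_filter.mp hx).1)).2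
      have hne1 : T.degree x ≠ 1 := by
        intro h
        have hxT : deg T x = 1 := by rw [aux_deg_eq]; exact h
        have : x ∈ leaves T := hxT
        rw [hlv] at this
        exact hx1 this
      have hne0 : 0 < T.degree x := by
        obtain ⟨u, hu⟩ := Fintype.exists_ne_of_one_lt_card (by omega) x
        obtain ⟨pw⟩ := hTt.isConnected.preconnected x u
        cases pw with
        | nil => exact absurd rfl hu
        | @cons _ b _ h2 r =>
          rw [← SimpleGraph.card_neighborFinset_eq_degree]
          exact Finset.card_pos.mpr ⟨b, by simp [SimpleGraph.mem_neighborFinset, h2]⟩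
      omega
    calc 2 * WF.card = ∑ _x ∈ WF, 2 := by rw [Finset.sum_const, smul_eq_mul, mul_comm]
    _ ≤ ∑ x ∈ WF, T.degree x := Finset.sum_le_sum hbound
  -- P-vertices
  have hSP : ∑ v ∈ PF, ((N.neighborFinset v).filter (fun u => deg N u = 1)).card + 2 * PF.card
      ≤ ∑ v ∈ PF, T.degree v := by
    have hbound : ∀ v ∈ PF, ((N.neighborFinset v).filter (fun u => deg N u = 1)).card + 2 ≤ T.degree v := by
      intro v hv
      have hv1 : ¬ deg N v = 1 := (Finset.mem_filter.mp ((Finset.mem_filter.mp hv).1)).2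
      have hvq : ∃ u, N.Adj v u ∧ deg N u = 1 := (Finset.mem_filter.mp hv).2
      have hTN : T.degree v = N.degree v := by
        rw [← SimpleGraph.card_neighborFinset_eq_degree,
          ← SimpleGraph.card_neighborFinset_eq_degree, hPdeg v hv1 hvq]
      have hdspl : ((N.neighborFinset v).filter (fun u => deg N u = 1)).card
          + ((N.neighborFinset v).filter (fun u => ¬ deg N u = 1)).card = N.degree v := by
        rw [Finset.card_filter_add_card_filter_not]
        exact SimpleGraph.card_neighborFinset_eq_degree _ _
      have h2 := hP2 v hv1 hvq
      omega
    calc ∑ v ∈ PF, ((N.neighborFinset v).filter (fun u => deg N u = 1)).card + 2 * PF.card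
        = ∑ v ∈ PF, (((N.neighborFinset v).filter (fun u => deg N u = 1)).card + 2) := by
          rw [Finset.sum_add_distrib, Finset.sum_const, smul_eq_mul, mul_comm]
    _ ≤ ∑ v ∈ PF, T.degree v := Finset.sum_le_sum hbound
  -- fiber counting: the leaf neighbors of P-vertices partition the leaves
  set phi : V → V := fun x => if h : ∃ c, N.Adj x c then h.choose else x with hphi
  have hphix : ∀ x, deg N x = 1 → N.Adj x (phi x) ∧ (∀ d, N.Adj x d → d = phi x) := by
    intro x hx
    obtain ⟨c, hc, hu, hcn⟩ := hleafnb x hx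
    have hex : ∃ c, N.Adj x c := ⟨c, hc⟩
    have hadj : N.Adj x (phi x) := by
      rw [hphi]
      simp only [dif_pos hex]
      exact hex.choose_spec
    exact ⟨hadj, fun d hd => by rw [hu d hd, hu (phi x) hadj]⟩
  have hfib : XF.card = ∑ v ∈ PF, (XF.filter (fun x => phi x = v)).card := by
    apply Finset.card_eq_sum_card_fiberwise
    intro x hx
    have hx1 : deg N x = 1 := (Finset.mem_filter.mp hx).2
    obtain ⟨hadj, huniq⟩ := hphix x hx1
    obtain ⟨c, hc, hu, hcn⟩ := hleafnb x hx1
    rw [hPF, hYF]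
    simp only [Finset.mem_coe, Finset.mem_filter, Finset.mem_univ, true_and]
    refine ⟨?_, ⟨x, hadj.symm, hx1⟩⟩
    rw [hu (phi x) hadj]
    exact hcn
  have hfibeq : ∀ v ∈ PF, (XF.filter (fun x => phi x = v)).card
      = ((N.neighborFinset v).filter (fun u => deg N u = 1)).card := by
    intro v hv
    congr 1
    ext x
    simp only [Finset.mem_filter, SimpleGraph.mem_neighborFinset, hXF,
      Finset.mem_univ, true_and]
    constructor
    · rintro ⟨hx1, hxv⟩
      obtain ⟨hadj, huniq⟩ := hphix x hx1
      rw [← hxv]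
      exact ⟨hadj.symm, hx1⟩
    · rintro ⟨hadj, hx1⟩
      obtain ⟨hadj', huniq⟩ := hphix x hx1
      exact ⟨hx1, (huniq v hadj.symm).symm⟩
  have hfib2 : XF.card = ∑ v ∈ PF, ((N.neighborFinset v).filter (fun u => deg N u = 1)).card := by
    rw [hfib]
    exact Finset.sum_congr rfl hfibeq
  omega
end

section
/- If N is a strictly tree-based phylogenetic network, then N is 3-colourable. Moreover, there exists a strictly tree-based network with chromatic number exactly 3. -/
open SimpleGraph

variable {V : Type*}

/-! ### Auxiliary lemmas -/

lemma deg_eq_degree' {V : Type*} [Fintype V] (G : SimpleGraph V) [DecidableRel G.Adj] (v : V) :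
    deg G v = G.degree v := by
  rw [deg, degree, ← Set.ncard_coe_finset, neighborFinset_def, Set.coe_toFinset]

lemma path_edge_start' {V : Type*} {T : SimpleGraph V} {u v : V} {p : T.Walk u v}
    (hp : p.IsPath) {w1 w2 : V} (h1 : s(u, w1) ∈ p.edges) (h2 : s(u, w2) ∈ p.edges) :
    w1 = w2 := by
  cases p with
  | nil => simp at h1
  | @cons _ b _ h q =>
    rw [SimpleGraph.Walk.edges_cons, List.mem_cons] at h1 h2
    rw [SimpleGraph.Walk.cons_isPath_iff] at hp
    have key : ∀ x, s(u, x) ∈ q.edges → False := fun x hx =>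
      hp.2 (q.fst_mem_support_of_mem_edges hx)
    rcases h1 with h1 | h1
    · rcases h2 with h2 | h2
      · rw [Sym2.eq_iff] at h1 h2
        rcases h1 with ⟨-, rfl⟩ | ⟨rfl, rfl⟩
        · rcases h2 with ⟨-, rfl⟩ | ⟨h2, rfl⟩
          · rfl
          · exact h2.symm
        · exact absurd rfl h.ne
      · exact absurd h2 (fun hh => key _ hh)
    · exact absurd h1 (fun hh => key _ hh)

lemma forest_exists_leaf' {V : Type*} [Fintype V] [Nonempty V] (T : SimpleGraph V)
    [DecidableRel T.Adj] (hT : T.IsAcyclic) : ∃ v, T.degree v ≤ 1 := by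
  classical
  set P : ℕ → Prop := fun n => ∃ (u v : V) (p : T.Walk u v), p.IsPath ∧ p.length = n with hP
  have hP0 : P 0 := ⟨Classical.arbitrary V, Classical.arbitrary V, SimpleGraph.Walk.nil,
    SimpleGraph.Walk.IsPath.nil, rfl⟩
  set N := Fintype.card V
  set n := Nat.findGreatest P N with hn
  have hPn : P n := Nat.findGreatest_spec (Nat.zero_le N) hP0
  have hmax : ∀ m, P m → m ≤ n := by
    intro m hm
    obtain ⟨a, b, p, hp, hl⟩ := hm
    exact Nat.le_findGreatest (hl ▸ hp.length_lt.le) ⟨a, b, p, hp, hl⟩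
  obtain ⟨u, v, p, hp, hlen⟩ := hPn
  refine ⟨u, ?_⟩
  by_contra hdeg
  push_neg at hdeg
  obtain ⟨w1, hw1m, w2, hw2m, hww⟩ := Finset.one_lt_card.mp hdeg
  rw [mem_neighborFinset] at hw1m hw2m
  have hsup : ∀ w, T.Adj u w → w ∈ p.support := by
    intro w hw
    by_contra hws
    have hp' : (SimpleGraph.Walk.cons hw.symm p).IsPath := hp.cons hws
    have : p.length + 1 ≤ n :=
      hmax _ ⟨w, v, SimpleGraph.Walk.cons hw.symm p, hp', by simp⟩
    omega
  obtain ⟨w, hw, hwe⟩ : ∃ w, T.Adj u w ∧ s(u, w) ∉ p.edges := by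
    by_cases h1 : s(u, w1) ∈ p.edges
    · refine ⟨w2, hw2m, fun h2 => hww ?_⟩
      exact (path_edge_start' hp h1 h2).symm ▸ rfl
    · exact ⟨w1, hw1m, h1⟩
  have hq : (p.takeUntil w (hsup w hw)).IsPath := hp.takeUntil _
  have hqe : s(w, u) ∉ (p.takeUntil w (hsup w hw)).edges := by
    rw [Sym2.eq_swap]
    exact fun h => hwe (p.edges_takeUntil_subset _ h)
  exact hT _ ((SimpleGraph.Walk.cons_isCycle_iff _ hw.symm).mpr ⟨hq, hqe⟩)

lemma three_col_aux (n : ℕ) : ∀ (V : Type) [Fintype V], Fintype.card V = n →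
    ∀ (T M G : SimpleGraph V), T.IsAcyclic → (∀ v, (M.neighborSet v).ncard ≤ 1) →
      G ≤ T ⊔ M → G.Colorable 3 := by
  induction n with
  | zero =>
    intro V _ hc T M G _ _ _
    haveI : IsEmpty V := Fintype.card_eq_zero_iff.mp hc
    exact Colorable.of_isEmpty 3
  | succ n ih =>
    intro V _ hcard T M G hT hM hle
    classical
    haveI : Nonempty V := Fintype.card_pos_iff.mp (by omega)
    obtain ⟨u, hu⟩ := forest_exists_leaf' T hT
    set s : Set V := {u}ᶜ with hs
    have hmem : ∀ {x : V}, x ≠ u → x ∈ s := fun hx => by simpa [hs]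
    have hcards : Fintype.card s = n := by
      have h1 : Fintype.card s = Fintype.card V - Fintype.card ({u} : Set V) :=
        Fintype.card_compl_set _
      rw [h1, Set.card_singleton, hcard]
      omega
    have hval : Function.Injective (Subtype.val : s → V) := Subtype.val_injective
    have hT' : (T.induce s).IsAcyclic := by
      intro x c hc
      exact hT _ (hc.map (f := ⟨Subtype.val, fun {a b} h => h⟩) hval)
    have hM' : ∀ v : s, ((M.induce s).neighborSet v).ncard ≤ 1 := by
      intro v
      have himg : Subtype.val '' ((M.induce s).neighborSet v) ⊆ M.neighborSet ↑v := by
        rintro _ ⟨w, hw, rfl⟩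
        exact hw
      calc ((M.induce s).neighborSet v).ncard
          = (Subtype.val '' ((M.induce s).neighborSet v)).ncard :=
            (Set.ncard_image_of_injective _ hval).symm
        _ ≤ (M.neighborSet ↑v).ncard := Set.ncard_le_ncard himg (M.neighborSet ↑v).toFinite
        _ ≤ 1 := hM _
    have hle' : G.induce s ≤ T.induce s ⊔ M.induce s := by
      intro a b h
      exact hle h
    obtain ⟨C⟩ := ih s hcards (T.induce s) (M.induce s) (G.induce s) hT' hM' hle'
    have hdegu : (G.neighborFinset u).card ≤ 2 := by
      have hsub : G.neighborSet u ⊆ T.neighborSet u ∪ M.neighborSet u := by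
        intro x hx
        rcases hle hx with h | h
        · exact Or.inl h
        · exact Or.inr h
      have := Set.ncard_le_ncard hsub (Set.toFinite _)
      have h2 := Set.ncard_union_le (T.neighborSet u) (M.neighborSet u)
      have h3 := hM u
      have h4 : G.degree u = (G.neighborFinset u).card := rfl
      have h5 : (G.neighborSet u).ncard = G.degree u := deg_eq_degree' G u
      have h6 : (T.neighborSet u).ncard = T.degree u := deg_eq_degree' T u
      omega
    let forb : Finset (Fin 3) :=
      (G.neighborFinset u).attach.image
        (fun w => C ⟨w.1, hmem (G.ne_of_adj ((mem_neighborFinset _ _ _).mp w.2)).symm⟩)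
    have hforb : forb.card ≤ 2 := by
      calc forb.card ≤ (G.neighborFinset u).attach.card := Finset.card_image_le
        _ = (G.neighborFinset u).card := Finset.card_attach
        _ ≤ 2 := hdegu
    obtain ⟨a, ha⟩ : ∃ a : Fin 3, a ∉ forb := by
      by_contra h
      push_neg at h
      have h5 : (Finset.univ : Finset (Fin 3)) ⊆ forb := fun x _ => h x
      have := Finset.card_le_card h5
      simp at this
      omega
    refine ⟨SimpleGraph.Coloring.mk
      (fun w => if h : w = u then a else C ⟨w, hmem h⟩) ?_⟩
    intro x y hxy
    have hxyne : x ≠ y := G.ne_of_adj hxy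
    by_cases hx : x = u
    · have hy : y ≠ u := fun h => hxyne (hx.trans h.symm)
      simp only [dif_pos hx, dif_neg hy]
      intro hcon
      apply ha
      rw [hcon]
      exact Finset.mem_image.mpr
        ⟨⟨y, (mem_neighborFinset _ _ _).mpr (hx ▸ hxy)⟩, Finset.mem_attach _ _, rfl⟩
    · by_cases hy : y = u
      · simp only [dif_neg hx, dif_pos hy]
        intro hcon
        apply ha
        rw [← hcon]
        exact Finset.mem_image.mpr
          ⟨⟨x, (mem_neighborFinset _ _ _).mpr (hy ▸ hxy.symm)⟩, Finset.mem_attach _ _, rfl⟩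
      · simp only [dif_neg hx, dif_neg hy]
        exact C.valid (show (G.induce s).Adj ⟨x, hmem hx⟩ ⟨y, hmem hy⟩ from hxy)

/-- The general colourability result. -/
lemma stbc_colorable (W : Type) [Fintype W] (N : SimpleGraph W) (X : Set W)
    (h2 : StrictlyTreeBasedConstr N X) : N.Colorable 3 := by
  obtain ⟨T, ⟨hTN, hTree, -⟩, hnew, hatt⟩ := h2
  classical
  set M := N \ T with hMdef
  have hle : N ≤ T ⊔ M := by
    intro v w h
    by_cases ht : T.Adj v w
    · exact Or.inl ht
    · exact Or.inr ⟨h, ht⟩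
  have hM : ∀ v, (M.neighborSet v).ncard ≤ 1 := by
    intro v
    by_cases hex : ∃ w, M.Adj v w
    · obtain ⟨w, hw⟩ := hex
      have hw' : N.Adj v w ∧ ¬T.Adj v w := hw
      have h2 : deg T v = 2 := (hnew v w hw'.1 hw'.2).1
      have h3 : deg N v = 3 := hatt v h2
      have hsub : M.neighborSet v ⊆ N.neighborSet v \ T.neighborSet v := by
        intro x hx
        exact ⟨hx.1, fun hc => hx.2 hc⟩
      have hTsub : T.neighborSet v ⊆ N.neighborSet v := fun x hx => hTN hx
      have hdiff : (N.neighborSet v \ T.neighborSet v).ncard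
          = (N.neighborSet v).ncard - (T.neighborSet v).ncard :=
        Set.ncard_diff hTsub (Set.toFinite _)
      have hle2 := Set.ncard_le_ncard hsub (Set.toFinite _)
      unfold deg at h2 h3
      omega
    · push_neg at hex
      have : M.neighborSet v = ∅ := by
        ext x
        simp only [mem_neighborSet, Set.mem_empty_iff_false, iff_false]
        exact hex x
      rw [this]
      simp
  exact three_col_aux (Fintype.card W) W rfl T M N hTree.IsAcyclic hM hle

/-! ### The concrete example -/

def tEdges : List (Fin 6 × Fin 6) :=
  [(0,1),(1,0),(1,2),(2,1),(2,3),(3,2),(3,4),(4,3),(2,5),(5,2)]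

def nEdges : List (Fin 6 × Fin 6) := tEdges ++ [(1,3),(3,1)]

def gT : SimpleGraph (Fin 6) where
  Adj i j := (i, j) ∈ tEdges
  symm := ⟨fun i j h => (by decide : ∀ i j : Fin 6, (i,j) ∈ tEdges → (j,i) ∈ tEdges) i j h⟩
  loopless := ⟨fun i h => (by decide : ∀ i : Fin 6, (i,i) ∉ tEdges) i h⟩

def gN : SimpleGraph (Fin 6) where
  Adj i j := (i, j) ∈ nEdges
  symm := ⟨fun i j h => (by decide : ∀ i j : Fin 6, (i,j) ∈ nEdges → (j,i) ∈ nEdges) i j h⟩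
  loopless := ⟨fun i h => (by decide : ∀ i : Fin 6, (i,i) ∉ nEdges) i h⟩

instance : DecidableRel gT.Adj := fun _ _ => inferInstanceAs (Decidable (_ ∈ _))
instance : DecidableRel gN.Adj := fun _ _ => inferInstanceAs (Decidable (_ ∈ _))

instance (e : Sym2 (Fin 6)) : DecidableRel (gT \ fromEdgeSet {e}).Adj := fun a b =>
  decidable_of_iff (gT.Adj a b ∧ ¬(s(a, b) = e ∧ a ≠ b)) (by
    rw [sdiff_adj, fromEdgeSet_adj, Set.mem_singleton_iff])

lemma gT_le_gN : gT ≤ gN := fun {a b} h =>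
  (by decide : ∀ a b : Fin 6, gT.Adj a b → gN.Adj a b) a b h

lemma gT_isTree : gT.IsTree := by
  constructor
  · rw [connected_iff]
    exact ⟨by decide, inferInstance⟩
  · rw [isAcyclic_iff_forall_adj_isBridge]
    intro v w h
    refine (isBridge_iff).mpr ?_
    revert h
    revert v w
    decide

lemma gN_phylo : IsPhyloNetwork gN ({0, 4, 5} : Set (Fin 6)) := by
  refine ⟨by rw [connected_iff]; exact ⟨by decide, inferInstance⟩, ?_, ?_⟩
  · intro v
    rw [deg_eq_degree']
    revert v
    decide
  · ext v
    rw [leaves, Set.mem_setOf_eq, deg_eq_degree']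
    have : gN.degree v = 1 ↔ (v = 0 ∨ v = 4 ∨ v = 5) := by revert v; decide
    simp [this, Set.mem_insert_iff]

lemma gN_stbc : StrictlyTreeBasedConstr gN ({0, 4, 5} : Set (Fin 6)) := by
  refine ⟨gT, ⟨gT_le_gN, gT_isTree, ?_⟩, ?_, ?_⟩
  · ext v
    rw [leaves, Set.mem_setOf_eq, deg_eq_degree']
    have : gT.degree v = 1 ↔ (v = 0 ∨ v = 4 ∨ v = 5) := by revert v; decide
    simp [this, Set.mem_insert_iff]
  · intro v w hN hT
    rw [deg_eq_degree', deg_eq_degree']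
    revert hN hT
    revert v w
    decide
  · intro v h
    rw [deg_eq_degree'] at h ⊢
    revert h
    revert v
    decide

lemma gN_clique : gN.IsClique ({1, 2, 3} : Finset (Fin 6)) := by
  rw [isClique_iff]
  intro a ha b hb hab
  simp only [Finset.coe_insert, Set.mem_insert_iff, Finset.coe_singleton,
    Set.mem_singleton_iff] at ha hb
  rcases ha with rfl | rfl | rfl <;> rcases hb with rfl | rfl | rfl <;>
    first
      | exact absurd rfl hab
      | decide

theorem strictly_tree_based_three_colourable :
    (∀ (W : Type) (_ : Fintype W) (N : SimpleGraph W) (X : Set W),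
        IsPhyloNetwork N X → StrictlyTreeBasedConstr N X → N.Colorable 3) ∧
    (∃ (W : Type) (_ : Fintype W) (N : SimpleGraph W) (X : Set W),
        IsPhyloNetwork N X ∧ StrictlyTreeBasedConstr N X ∧ N.chromaticNumber = 3) := by
  constructor
  · intro W _ N X _ h2
    exact stbc_colorable W N X h2
  · refine ⟨Fin 6, inferInstance, gN, ({0, 4, 5} : Set (Fin 6)), gN_phylo, gN_stbc, ?_⟩
    have hcol : gN.Colorable 3 := stbc_colorable _ gN _ gN_stbc
    have h1 : gN.chromaticNumber ≤ 3 := by exact_mod_cast hcol.chromaticNumber_le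
    have h2 : (3 : ℕ∞) ≤ gN.chromaticNumber := by
      have := gN_clique.card_le_chromaticNumber
      simpa using this
    exact le_antisymm h1 h2
end
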